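/- arXiv:1406.0786 — 2 statements merged into one kernel-verified Lean document; each statement's English description precedes it below -/
import Mathlib

section
/- Let $f : [p] \to [q]$ be a function and let $v = v_1 \otimes v_2 \otimes \cdots \otimes v_q \in \bigotimes^q \mathbb{Q}[q]$, identified with an element of $\mathbb{Q}\mathcal{F}([q],[q])$ (formal linear combinations of functions $[q] \to [q]$) via one-line notation. If $f$ does not hit $m \in [q]$ in its image, and if $v_m$ has coefficient-sum zero, then the composition $fv = 0$ in $\mathbb{Q}\mathcal{F}([p],[q])$. -/
/-- The identification of `⨂^q ℚ[q]` with `ℚ F([q],[q])` via one-line notation: the pure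
tensor `v_1 ⊗ ⋯ ⊗ v_q` corresponds to the formal linear combination whose coefficient at
a function `g : [q] → [q]` is `∏ i, v_i (g i)`. -/
noncomputable def tensorExpand (q : ℕ) (v : Fin q → Fin q → ℚ) : (Fin q → Fin q) →₀ ℚ :=
  Finsupp.equivFunOnFinite.symm (fun g => ∏ i, v i (g i))

/-!
The coefficient of `h` in `f v` is the sum of `∏ i, v i (g i)` over all `g` with `g ∘ f = h`.
That constraint restricts each value `g i` separately (to the values `h` takes on the fibre
`f⁻¹ i`), so the sum factors as `∏ i, ∑ a admissible at i, v i a`. Over a point `m` missed by `f`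
every `a` is admissible, so the `m`-th factor is the coefficient-sum of `v m`, which is zero.
-/

theorem Finsupp.mapDomain_apply_eq_sum_filter {α β M : Type*} [Fintype α] [DecidableEq β]
    [AddCommMonoid M] (F : α → β) (x : α →₀ M) (b : β) :
    x.mapDomain F b = ∑ a with F a = b, x a := by
  rw [mapDomain, sum_apply, sum_fintype _ _ fun _ => by rw [single_zero, coe_zero, Pi.zero_apply],
    Finset.sum_filter]
  simp only [single_apply]

namespace Fintype

variable {ι α β : Type*} [Fintype ι] [DecidableEq ι] [Fintype α] [DecidableEq α] [Fintype β]

theorem filter_comp_eq_eq_piFinset (f : β → ι) (h : β → α) :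
    ({g | g ∘ f = h} : Finset (ι → α)) = piFinset fun i => {a | ∀ x, f x = i → h x = a} := by
  ext g
  simp only [Finset.mem_filter, Finset.mem_univ, true_and, mem_piFinset, funext_iff,
    Function.comp_apply]
  constructor
  · rintro hg i x rfl
    exact (hg x).symm
  · intro hg x
    exact (hg (f x) x rfl).symm

theorem sum_prod_filter_comp_eq {R : Type*} [CommSemiring R] (v : ι → α → R) (f : β → ι)
    (h : β → α) :
    ∑ g : ι → α with g ∘ f = h, ∏ i, v i (g i) =
      ∏ i, ∑ a with ∀ x, f x = i → h x = a, v i a := by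
  rw [filter_comp_eq_eq_piFinset, Finset.prod_univ_sum]

end Fintype

/-- If `f : [p] → [q]` misses the value `m`, and the `m`-th tensor factor of
`v = v_1 ⊗ ⋯ ⊗ v_q` has coefficient-sum zero, then the composite `f v` (precomposition
with `f`, extended linearly) vanishes in `ℚ F([p],[q])`. -/
theorem missed_factor_kills (p q : ℕ) (f : Fin p → Fin q) (v : Fin q → Fin q → ℚ)
    (m : Fin q) (hm : m ∉ Set.range f) (hsum : ∑ j, v m j = 0) :
    Finsupp.lmapDomain ℚ ℚ (fun g : Fin q → Fin q => g ∘ f) (tensorExpand q v) = 0 := by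
  have hmissed : ∀ x, f x ≠ m := fun x hx => hm ⟨x, hx⟩
  ext h
  rw [Finsupp.lmapDomain_apply, Finsupp.mapDomain_apply_eq_sum_filter]
  simp only [tensorExpand, Finsupp.coe_equivFunOnFinite_symm, Finsupp.coe_zero, Pi.zero_apply]
  rw [Fintype.sum_prod_filter_comp_eq]
  refine Finset.prod_eq_zero (Finset.mem_univ m) ?_
  simpa [hmissed] using hsum
end

section
/- For $k \geq 1$, define $\mu = (e_1 - e_2) \otimes (e_2 - e_1) \otimes (e_3 - e_2) \otimes (e_4 - e_3) \otimes \cdots \otimes (e_{k+1} - e_k) \in \bigotimes^{k+1}\mathbb{Q}[k+1]$, identified with an element of $\mathbb{Q}\mathcal{F}([k+1],[k+1])$. Then (a) the image of $\mu$ under the quotient map $\mathbb{Q}\mathcal{F}([k+1],[k+1]) \to \mathbb{Q}\mathcal{S}_{k+1}$ killing non-bijections is $1 + (1\;2)$, and (b) for every function $f : [k] \to [k+1]$, $f\mu = 0$. -/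
/-- The factors of `μ = (e_1 - e_2) ⊗ (e_2 - e_1) ⊗ (e_3 - e_2) ⊗ ⋯ ⊗ (e_{k+1} - e_k)`,
written 0-indexed: factor `0` is `e_0 - e_1`, factor `1` is `e_1 - e_0`, and factor
`i ≥ 2` is `e_i - e_{i-1}`. -/
def muFactor (k : ℕ) : Fin (k + 1) → Fin (k + 1) → ℚ := fun i j =>
  if (i : ℕ) = 0 then (if (j : ℕ) = 0 then 1 else 0) - (if (j : ℕ) = 1 then 1 else 0)
  else if (i : ℕ) = 1 then (if (j : ℕ) = 1 then 1 else 0) - (if (j : ℕ) = 0 then 1 else 0)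
  else (if j = i then 1 else 0) - (if (j : ℕ) + 1 = (i : ℕ) then 1 else 0)

theorem Finsupp.mapDomain_precomp_prod_eq_zero {ι κ α R : Type*} [Fintype ι] [Fintype κ]
    [CommSemiring R] (v : ι → κ → R) (f : α → ι) {m : ι} (hm : m ∉ Set.range f)
    (hv : ∑ j, v m j = 0) :
    Finsupp.mapDomain (fun g : ι → κ => g ∘ f)
      (Finsupp.equivFunOnFinite.symm fun g => ∏ i, v i (g i)) = 0 := by
  classical
  ext h
  -- `g ∘ f = h` is a condition on each coordinate of `g` separately, so the coefficient at `h`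
  -- factors as a product of row sums, one of which is the vanishing sum of row `m`.
  let w : ι → κ → R := fun i j => if ∀ x, f x = i → j = h x then v i j else 0
  have hcoord (g : ι → κ) :
      (if g ∘ f = h then ∏ i, v i (g i) else 0) = ∏ i, w i (g i) := by
    rw [Fintype.prod_ite_zero]
    refine if_congr ⟨?_, ?_⟩ rfl rfl
    · rintro rfl i x rfl; rfl
    · exact fun H => funext fun x => H _ x rfl
  have hwm : ∑ j, w m j = 0 := by
    simp only [Set.mem_range, not_exists] at hm
    simpa [w, hm] using hv
  calc (Finsupp.mapDomain (fun g : ι → κ => g ∘ f)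
      (Finsupp.equivFunOnFinite.symm fun g => ∏ i, v i (g i))) h
      = ∑ g : ι → κ, if g ∘ f = h then ∏ i, v i (g i) else 0 := by
        rw [Finsupp.mapDomain, Finsupp.sum_fintype _ _ (fun _ => Finsupp.single_zero _),
          Finsupp.finsetSum_apply]
        simp [Finsupp.single_apply]
    _ = ∏ i, ∑ j, w i j := by simp only [hcoord, Fintype.prod_sum]
    _ = 0 := Finset.prod_eq_zero (Finset.mem_univ m) hwm

theorem Function.Bijective.comp_eq_of_forall_comp_le {ι M : Type*} [Fintype ι] [AddCommMonoid M]
    [PartialOrder M] [IsOrderedCancelAddMonoid M] {g : ι → ι} (hg : g.Bijective) {w : ι → M}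
    (hle : ∀ i, w (g i) ≤ w i) (i : ι) : w (g i) = w i :=
  (Finset.sum_eq_sum_iff_of_le fun i _ => hle i).1
    ((Equiv.ofBijective g hg).sum_comp w) i (Finset.mem_univ i)

theorem muFactor_eq_single_sub_single (n : ℕ) (i : Fin (n + 2)) :
    ∃ a b : Fin (n + 2), muFactor (n + 1) i = Pi.single a 1 - Pi.single b 1 := by
  rcases i with ⟨_ | _ | i, hi⟩ <;>
    [refine ⟨0, 1, ?_⟩; refine ⟨1, 0, ?_⟩; refine ⟨⟨i + 2, hi⟩, ⟨i + 1, by omega⟩, ?_⟩] <;>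
  · funext j
    simp only [muFactor, Pi.sub_apply, Pi.single_apply, Fin.ext_iff, Fin.val_zero, Fin.val_one]
    split_ifs <;> first | contradiction | omega | simp

theorem sum_muFactor_eq_zero (n : ℕ) (i : Fin (n + 2)) : ∑ j, muFactor (n + 1) i j = 0 := by
  obtain ⟨a, b, h⟩ := muFactor_eq_single_sub_single n i
  simp [h]

theorem muFactor_self (k : ℕ) (i : Fin (k + 1)) : muFactor k i i = 1 := by
  simp only [muFactor]
  split_ifs <;> simp_all

theorem val_le_max_one_of_muFactor_ne_zero {k : ℕ} {i j : Fin (k + 1)}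
    (h : muFactor k i j ≠ 0) : (j : ℕ) ≤ max (i : ℕ) 1 := by
  contrapose! h
  simp only [muFactor, Fin.ext_iff]
  split_ifs <;> first | omega | simp

theorem eq_id_or_swap_of_prod_muFactor_ne_zero (n : ℕ) {g : Fin (n + 2) → Fin (n + 2)}
    (hg : g.Bijective) (h : ∏ i, muFactor (n + 1) i (g i) ≠ 0) :
    g = id ∨ g = ⇑(Equiv.swap (0 : Fin (n + 2)) 1) := by
  have hle (i : Fin (n + 2)) : (g i : ℕ) ≤ max (i : ℕ) 1 :=
    val_le_max_one_of_muFactor_ne_zero (Finset.prod_ne_zero_iff.1 h i (Finset.mem_univ i))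
  have hw := hg.comp_eq_of_forall_comp_le (w := fun j => max (j : ℕ) 1)
    fun i => max_le (hle i) (le_max_right _ _)
  have hfix (i : Fin (n + 2)) (hi : 2 ≤ (i : ℕ)) : g i = i := by
    have := hw i
    ext; omega
  have hg01 : (g 0 : ℕ) ≠ g 1 := fun e => zero_ne_one (hg.injective (Fin.ext e))
  have hg0 : (g 0 : ℕ) ≤ 1 := by simpa using hle 0
  have hg1 : (g 1 : ℕ) ≤ 1 := by simpa using hle 1
  rcases Nat.le_one_iff_eq_zero_or_eq_one.1 hg0 with h0 | h0
  · left
    funext i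
    rcases i with ⟨_ | _ | i, hi⟩
    · ext; simpa using h0
    · ext; simp; omega
    · exact hfix _ (by simp)
  · right
    funext i
    rcases i with ⟨_ | _ | i, hi⟩
    · ext; simpa using h0
    · show g 1 = Equiv.swap 0 1 1
      rw [Equiv.swap_apply_right, Fin.ext_iff, Fin.val_zero]; omega
    · rw [hfix _ (by simp), Equiv.swap_apply_of_ne_of_ne] <;> simp [Fin.ext_iff]

theorem prod_muFactor_id (k : ℕ) : ∏ i, muFactor k i i = 1 :=
  Finset.prod_eq_one fun i _ => muFactor_self k i

theorem prod_muFactor_swap (n : ℕ) :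
    ∏ i, muFactor (n + 1) i (Equiv.swap (0 : Fin (n + 2)) 1 i) = 1 := by
  rw [Fin.prod_univ_succ, Fin.prod_univ_succ]
  simp [muFactor, Equiv.swap_apply_of_ne_of_ne, Fin.ext_iff]

/-- For `k ≥ 1`: (a) the image of `μ` in `ℚ S_{k+1}` under killing the non-bijections is
`1 + (1 2)`, expressed by saying that the coefficient of `μ` at any bijective `g` matches
the corresponding coefficient of `1 + (1 2)`; and (b) `μ` annihilates every function
`f : [k] → [k+1]` under precomposition. -/
theorem lower_squisher_properties (k : ℕ) (hk : 1 ≤ k) :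
    (∀ g : Fin (k + 1) → Fin (k + 1), Function.Bijective g →
      (tensorExpand (k + 1) (muFactor k)) g =
        (if g = id then (1 : ℚ) else 0) +
          (if g = ⇑(Equiv.swap (0 : Fin (k + 1)) 1) then 1 else 0)) ∧
    (∀ f : Fin k → Fin (k + 1),
      Finsupp.lmapDomain ℚ ℚ (fun g : Fin (k + 1) → Fin (k + 1) => g ∘ f)
        (tensorExpand (k + 1) (muFactor k)) = 0) := by
  obtain ⟨n, rfl⟩ := Nat.exists_eq_add_of_le' hk
  refine ⟨fun g hg => ?_, fun f => ?_⟩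
  · change ∏ i, muFactor (n + 1) i (g i) = _
    have hswap : ⇑(Equiv.swap (0 : Fin (n + 2)) 1) ≠ id := fun e => by simpa using congrFun e 0
    rcases em (g = id) with rfl | hid
    · simp [prod_muFactor_id, hswap.symm]
    rcases em (g = ⇑(Equiv.swap (0 : Fin (n + 2)) 1)) with rfl | hsw
    · simp [prod_muFactor_swap, hswap]
    rw [if_neg hid, if_neg hsw, add_zero]
    by_contra h
    exact (eq_id_or_swap_of_prod_muFactor_ne_zero n hg h).elim hid hsw
  · have hf : ¬ f.Surjective := fun hs => by simpa using Fintype.card_le_of_surjective f hs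
    obtain ⟨m, hm⟩ := not_forall.1 hf
    exact Finsupp.mapDomain_precomp_prod_eq_zero _ f hm (sum_muFactor_eq_zero n m)
end
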